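/- The roots of P₁₁(X) = X^6 - X^5 + 7X^4 - 35X^3 + 77X^2 - 121X + 1331 in ℂ all have absolute value 11^{1/2}, and P₁₁ satisfies the functional equation X^6 · P₁₁(11/X) = 11^3 · P₁₁(X). -/

import Mathlib

/-!
Substituting `s = z + 11/z` gives `P₁₁(z) = z³ h(s)` with `h = s³ - s² - 26s - 13`.
The cubic `h` changes sign on `(-5, -4)`, `(-1, 0)` and `(5, 6)`, so its three roots are real
and satisfy `s² < 4 · 11`. A root `z` of `P₁₁` is therefore a root of `z² - sz + 11` for such
an `s`; this quadratic has negative discriminant, so `z` is not real and `|z|² = z z̄ = 11`.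
The functional equation reflects the invariance of `z + 11/z` under `z ↦ 11/z`.
-/

open Polynomial

/-- `P₁₁(X) = X^6 - X^5 + 7X^4 - 35X^3 + 77X^2 - 121X + 1331`, viewed over `ℂ`. -/
noncomputable def P11C : Polynomial ℂ :=
  X ^ 6 - X ^ 5 + 7 * X ^ 4 - 35 * X ^ 3 + 77 * X ^ 2 - 121 * X + 1331

open Set

theorem Polynomial.exists_isRoot_mem_Ioo_of_eval_mul_eval_neg (p : ℝ[X]) {a b : ℝ} (hab : a ≤ b)
    (h : p.eval a * p.eval b < 0) : ∃ r ∈ Ioo a b, p.IsRoot r := by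
  have hcont := p.continuous.continuousOn (s := Icc a b)
  rcases mul_neg_iff.mp h with ⟨ha, hb⟩ | ⟨ha, hb⟩
  · exact intermediate_value_Ioo' hab hcont ⟨hb, ha⟩
  · exact intermediate_value_Ioo hab hcont ⟨ha, hb⟩

theorem Polynomial.exists_mem_roots_ofReal_eq {p : ℝ[X]} (hp : p ≠ 0)
    (hroots : p.roots.card = p.natDegree) {z : ℂ} (hz : aeval z p = 0) :
    ∃ r ∈ p.roots, (r : ℂ) = z := by
  have hz' : z ∈ (p.map Complex.ofRealHom).roots := by
    rw [mem_roots (map_ne_zero hp), IsRoot, eval_map]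
    exact hz
  rwa [← roots_map_of_injective_of_card_eq_natDegree Complex.ofReal_injective hroots,
    Multiset.mem_map] at hz'

theorem Complex.normSq_eq_of_sq_sub_mul_add_eq_zero {s q : ℝ} (hdisc : s ^ 2 < 4 * q) {z : ℂ}
    (hz : z ^ 2 - s * z + q = 0) : Complex.normSq z = q := by
  have hre := congrArg Complex.re hz
  have him := congrArg Complex.im hz
  simp only [sq, Complex.add_re, Complex.sub_re, Complex.mul_re, Complex.ofReal_re,
    Complex.ofReal_im, Complex.zero_re, Complex.add_im, Complex.sub_im, Complex.mul_im,
    Complex.zero_im] at hre him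
  have him_ne : z.im ≠ 0 := by
    intro h
    rw [h] at hre
    nlinarith [sq_nonneg (2 * z.re - s)]
  have hre_eq : 2 * z.re = s := by
    have : z.im * (2 * z.re - s) = 0 := by linear_combination him
    linarith [(mul_eq_zero.mp this).resolve_left him_ne]
  rw [Complex.normSq_apply]
  linear_combination -hre + z.re * hre_eq

noncomputable def P11Real : ℝ[X] := X ^ 3 - X ^ 2 - 26 * X - 13

lemma P11C_eval_eq_mul_aeval_P11Real {z : ℂ} (hz : z ≠ 0) :
    P11C.eval z = z ^ 3 * aeval (z + 11 / z) P11Real := by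
  simp only [P11C, P11Real, eval_add, eval_sub, eval_mul, eval_pow, eval_X, eval_ofNat,
    map_sub, map_mul, map_pow, aeval_X, map_ofNat]
  field_simp
  ring

lemma P11C_functional_equation {z : ℂ} (hz : z ≠ 0) :
    z ^ 6 * P11C.eval (11 / z) = 11 ^ 3 * P11C.eval z := by
  rw [P11C_eval_eq_mul_aeval_P11Real hz, P11C_eval_eq_mul_aeval_P11Real (by simpa using hz),
    div_div_cancel₀ (by norm_num), add_comm]
  field_simp

lemma natDegree_P11Real : P11Real.natDegree = 3 := by
  unfold P11Real
  compute_degree!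

lemma P11Real_ne_zero : P11Real ≠ 0 :=
  ne_zero_of_natDegree_gt (n := 0) (by rw [natDegree_P11Real]; norm_num)

lemma roots_P11Real : ∃ r₁ ∈ Ioo (-5 : ℝ) (-4), ∃ r₂ ∈ Ioo (-1 : ℝ) 0, ∃ r₃ ∈ Ioo (5 : ℝ) 6,
    P11Real.roots = {r₁, r₂, r₃} := by
  have sign_change (a b : ℝ) (hab : a ≤ b) (h : P11Real.eval a * P11Real.eval b < 0) :=
    P11Real.exists_isRoot_mem_Ioo_of_eval_mul_eval_neg hab h
  obtain ⟨r₁, h₁, hr₁⟩ := sign_change (-5) (-4) (by norm_num) (by norm_num [P11Real])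
  obtain ⟨r₂, h₂, hr₂⟩ := sign_change (-1) 0 (by norm_num) (by norm_num [P11Real])
  obtain ⟨r₃, h₃, hr₃⟩ := sign_change 5 6 (by norm_num) (by norm_num [P11Real])
  refine ⟨r₁, h₁, r₂, h₂, r₃, h₃, (Multiset.eq_of_le_of_card_le ?_ ?_).symm⟩
  · have hnodup : ({r₁, r₂, r₃} : Multiset ℝ).Nodup := by
      simp only [Multiset.insert_eq_cons, Multiset.nodup_cons, Multiset.mem_cons,
        Multiset.mem_singleton, Multiset.nodup_singleton, and_true, not_or]
      refine ⟨⟨?_, ?_⟩, ?_⟩ <;> intro h <;> simp only [mem_Ioo] at * <;> linarith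
    rw [Multiset.le_iff_subset hnodup]
    intro r hr
    simp only [Multiset.insert_eq_cons, Multiset.mem_cons, Multiset.mem_singleton] at hr
    rw [mem_roots P11Real_ne_zero]
    rcases hr with rfl | rfl | rfl <;> assumption
  · simpa [natDegree_P11Real] using card_roots' P11Real

lemma norm_eq_sqrt_of_isRoot_P11C {z : ℂ} (hz : P11C.IsRoot z) : ‖z‖ = Real.sqrt 11 := by
  have hz0 : z ≠ 0 := by
    rintro rfl
    norm_num [P11C] at hz
  obtain ⟨r₁, h₁, r₂, h₂, r₃, h₃, hroots⟩ := roots_P11Real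
  have hcard : P11Real.roots.card = P11Real.natDegree := by simp [hroots, natDegree_P11Real]
  have htrace : aeval (z + 11 / z) P11Real = 0 := by
    simpa [hz0, hz.eq_zero] using (P11C_eval_eq_mul_aeval_P11Real hz0).symm
  obtain ⟨r, hr, hrz⟩ := exists_mem_roots_ofReal_eq P11Real_ne_zero hcard htrace
  have hdisc : r ^ 2 < 4 * 11 := by
    simp only [hroots, Multiset.insert_eq_cons, Multiset.mem_cons, Multiset.mem_singleton] at hr
    rcases hr with rfl | rfl | rfl <;> simp only [mem_Ioo] at * <;> nlinarith
  have hquad : z ^ 2 - r * z + (11 : ℝ) = 0 := by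
    rw [hrz]
    field_simp
    push_cast
    ring
  rw [Complex.norm_def, Complex.normSq_eq_of_sq_sub_mul_add_eq_zero hdisc hquad]

/-- All complex roots of `P₁₁` have absolute value `√11`, and `P₁₁` satisfies the
functional equation `X^6 · P₁₁(11/X) = 11^3 · P₁₁(X)`. -/
theorem P11_weil_polynomial :
    (∀ z : ℂ, P11C.IsRoot z → ‖z‖ = Real.sqrt 11) ∧
      (∀ z : ℂ, z ≠ 0 → z ^ 6 * P11C.eval (11 / z) = 11 ^ 3 * P11C.eval z) :=
  ⟨fun _ hz => norm_eq_sqrt_of_isRoot_P11C hz, fun _ hz => P11C_functional_equation hz⟩
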